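/- arXiv:2110.08311 — 2 statements merged into one kernel-verified Lean document; each statement's English description precedes it below -/
import Mathlib

section
/- Let X be a locally ordered space, Y a strictly locally ordered space given by a strict ordered basis 𝔅', and f : X → Y a function. Then f is locally increasing at a point x ∈ X if, and only if, f is continuous at x and there exist an open poset O of X and B₀ ∈ 𝔅' such that x ∈ |O|, f(|O|) ⊆ |B₀|, and the restriction f : (|O|, ≤_O) → (|B₀|, ≤_{B₀}) is increasing. -/
universe u v w v'

/-! ## Ordered bases and locally ordered spaces -/

/-- An *ordered subset* of `X`: a pair of a carrier set and a relation on `X`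
(intended to be a partial order on the carrier). -/
structure OSet (X : Type u) : Type u where
  carrier : Set X
  le : X → X → Prop

namespace OSet

variable {X : Type u} {Y : Type v}

/-- `B` is a partially ordered subset: the relation only relates elements of the
carrier, is reflexive on the carrier, antisymmetric and transitive. -/
def IsPoset (B : OSet X) : Prop :=
  (∀ p q, B.le p q → p ∈ B.carrier ∧ q ∈ B.carrier) ∧
  (∀ p ∈ B.carrier, B.le p p) ∧
  (∀ p q, B.le p q → B.le q p → p = q) ∧
  (∀ p q r, B.le p q → B.le q r → B.le p r)

/-- `B ⊆_lax B'`. -/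
def laxSub (B B' : OSet X) : Prop :=
  B.carrier ⊆ B'.carrier ∧ ∀ p q, B.le p q → B'.le p q

/-- `B ⊆_str B'` : the carrier is included and `≤_B` is the restriction of `≤_{B'}`
to the carrier of `B`. -/
def strSub (B B' : OSet X) : Prop :=
  B.carrier ⊆ B'.carrier ∧ ∀ p ∈ B.carrier, ∀ q ∈ B.carrier, (B.le p q ↔ B'.le p q)

/-- Product of two ordered subsets, with the product order. -/
def prod (B : OSet X) (B' : OSet Y) : OSet (X × Y) where
  carrier := B.carrier ×ˢ B'.carrier
  le p q := B.le p.1 q.1 ∧ B'.le p.2 q.2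

/-- The restriction of an ordered subset to a subset `S` (of its carrier). -/
def restrict (B : OSet X) (S : Set X) : OSet X where
  carrier := S
  le p q := B.le p q ∧ p ∈ S ∧ q ∈ S

/-- `B` is a Nachbin ordered (sub)space: its order is closed in the product of the
subspace `B.carrier` (with the topology inherited from `X`) with itself. -/
def IsNachbin [TopologicalSpace X] (B : OSet X) : Prop :=
  IsClosed {p : B.carrier × B.carrier | B.le p.1 p.2}

end OSet

/-- `𝔅` is an *ordered basis* on the topological space `X`. -/
structure IsOrderedBasis {X : Type u} [TopologicalSpace X] (𝔅 : Set (OSet X)) : Prop where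
  isPoset : ∀ B ∈ 𝔅, B.IsPoset
  isBasis : TopologicalSpace.IsTopologicalBasis (OSet.carrier '' 𝔅)
  compat : ∀ x : X, ∀ B ∈ 𝔅, ∀ B' ∈ 𝔅, x ∈ B.carrier → x ∈ B'.carrier →
    ∃ B'' ∈ 𝔅, x ∈ B''.carrier ∧ B''.carrier ⊆ B.carrier ∩ B'.carrier ∧
      ∀ p q, B''.le p q → B.le p q ∧ B'.le p q

/-- `𝔅` is a *strict* ordered basis: the interpolating element `B''` can be chosen
with `B'' ⊆_str B` and `B'' ⊆_str B'`. -/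
def IsStrictOrderedBasis {X : Type u} [TopologicalSpace X] (𝔅 : Set (OSet X)) : Prop :=
  IsOrderedBasis 𝔅 ∧
    ∀ x : X, ∀ B ∈ 𝔅, ∀ B' ∈ 𝔅, x ∈ B.carrier → x ∈ B'.carrier →
      ∃ B'' ∈ 𝔅, x ∈ B''.carrier ∧ B''.strSub B ∧ B''.strSub B'

/-- `𝔅'` is coarser than `𝔅`. -/
def CoarserThan {X : Type u} (𝔅' 𝔅 : Set (OSet X)) : Prop :=
  ∀ x : X, ∀ B' ∈ 𝔅', x ∈ B'.carrier → ∃ B ∈ 𝔅, x ∈ B.carrier ∧ B.laxSub B'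

/-- `𝔅'` is strictly coarser than `𝔅` (`⊆_lax` replaced by `⊆_str`). -/
def StrictCoarserThan {X : Type u} (𝔅' 𝔅 : Set (OSet X)) : Prop :=
  ∀ x : X, ∀ B' ∈ 𝔅', x ∈ B'.carrier → ∃ B ∈ 𝔅, x ∈ B.carrier ∧ B.strSub B'

/-- Two ordered bases are equivalent when each is coarser than the other. -/
def EquivBases {X : Type u} (𝔅 𝔅' : Set (OSet X)) : Prop :=
  CoarserThan 𝔅' 𝔅 ∧ CoarserThan 𝔅 𝔅'

/-- Strict equivalence of ordered bases. -/
def StrictEquivBases {X : Type u} (𝔅 𝔅' : Set (OSet X)) : Prop :=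
  StrictCoarserThan 𝔅' 𝔅 ∧ StrictCoarserThan 𝔅 𝔅'

/-- The *open posets* `Ō(𝔅)` determined by an ordered basis `𝔅`. -/
def openPosets {X : Type u} (𝔅 : Set (OSet X)) : Set (OSet X) :=
  {A | ∀ x ∈ A.carrier, ∃ B ∈ 𝔅, x ∈ B.carrier ∧ B.laxSub A}

/-- `f` is locally increasing at `x`, w.r.t. the ordered bases `𝔅` (source) and
`𝔅'` (target). -/
def LocIncrAt {X : Type u} {Y : Type v} (𝔅 : Set (OSet X)) (𝔅' : Set (OSet Y))
    (f : X → Y) (x : X) : Prop :=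
  ∀ B' ∈ 𝔅', f x ∈ B'.carrier →
    ∃ B ∈ 𝔅, x ∈ B.carrier ∧ (∀ p ∈ B.carrier, f p ∈ B'.carrier) ∧
      ∀ p q, B.le p q → B'.le (f p) (f q)

/-- `f` is locally increasing. -/
def LocIncr {X : Type u} {Y : Type v} (𝔅 : Set (OSet X)) (𝔅' : Set (OSet Y))
    (f : X → Y) : Prop :=
  ∀ x : X, LocIncrAt 𝔅 𝔅' f x

/-- The locally ordered space given by the basis `𝔅` is locally Nachbin. -/
def IsLocallyNachbin {X : Type u} [TopologicalSpace X] (𝔅 : Set (OSet X)) : Prop :=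
  ∀ x : X, ∀ O ∈ openPosets 𝔅, x ∈ O.carrier →
    ∃ O' ∈ openPosets 𝔅, x ∈ O'.carrier ∧ O'.laxSub O ∧ O'.IsNachbin

/-- The product ordered basis on `X × Y`. -/
def prodBasis {X : Type u} {Y : Type v} (𝔅 : Set (OSet X)) (𝔅' : Set (OSet Y)) :
    Set (OSet (X × Y)) :=
  {C | ∃ B ∈ 𝔅, ∃ B' ∈ 𝔅', C = B.prod B'}

/-- A topological space viewed as a locally ordered space: all its open subsets,
each ordered by equality. -/
def trivBasis (T : Type v) [TopologicalSpace T] : Set (OSet T) :=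
  {B | ∃ U : Set T, IsOpen U ∧ B = ⟨U, fun p q => p = q ∧ p ∈ U⟩}

/-!
Basis elements of `𝔅` are open posets, and a locally increasing map is continuous because the
carriers of both bases are topological bases. Conversely, given `B' ∋ f x`, strictness of `𝔅'`
yields `B'' ∈ 𝔅'` with `B'' ⊆_str B₀` and `B'' ⊆_str B'`, so `≤_{B₀}` and `≤_{B'}` agree on `|B''|`;
by continuity `f⁻¹ |B''|` is a neighbourhood of `x`, inside which some `B ∈ 𝔅` sits laxly below `O`.
-/

open Topology

namespace OSet

variable {X : Type u}

theorem laxSub_refl (B : OSet X) : B.laxSub B :=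
  ⟨subset_rfl, fun _ _ h => h⟩

theorem laxSub.trans {A B C : OSet X} (hAB : A.laxSub B) (hBC : B.laxSub C) : A.laxSub C :=
  ⟨hAB.1.trans hBC.1, fun p q h => hBC.2 p q (hAB.2 p q h)⟩

theorem strSub.le_of_le {A B C : OSet X} (hAB : A.strSub B) (hAC : A.strSub C) {p q : X}
    (hp : p ∈ A.carrier) (hq : q ∈ A.carrier) (h : B.le p q) : C.le p q :=
  (hAC.2 p hp q hq).1 ((hAB.2 p hp q hq).2 h)

end OSet

theorem mem_openPosets_of_mem {X : Type u} {𝔅 : Set (OSet X)} {B : OSet X} (hB : B ∈ 𝔅) :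
    B ∈ openPosets 𝔅 :=
  fun _ hx => ⟨B, hB, hx, B.laxSub_refl⟩

section

variable {X : Type u} {Y : Type v} [TopologicalSpace X] [TopologicalSpace Y]
  {𝔅 : Set (OSet X)} {𝔅' : Set (OSet Y)}

theorem IsOrderedBasis.isOpen (h𝔅 : IsOrderedBasis 𝔅) {B : OSet X} (hB : B ∈ 𝔅) :
    IsOpen B.carrier :=
  h𝔅.isBasis.isOpen ⟨B, hB, rfl⟩

theorem IsOrderedBasis.exists_mem (h𝔅 : IsOrderedBasis 𝔅) (x : X) :
    ∃ B ∈ 𝔅, x ∈ B.carrier := by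
  obtain ⟨_, ⟨B, hB, rfl⟩, hx, -⟩ :=
    h𝔅.isBasis.exists_subset_of_mem_open (Set.mem_univ x) isOpen_univ
  exact ⟨B, hB, hx⟩

theorem IsOrderedBasis.exists_laxSub_of_mem_nhds (h𝔅 : IsOrderedBasis 𝔅) {O : OSet X}
    (hO : O ∈ openPosets 𝔅) {x : X} (hx : x ∈ O.carrier) {U : Set X} (hU : U ∈ 𝓝 x) :
    ∃ B ∈ 𝔅, x ∈ B.carrier ∧ B.carrier ⊆ U ∧ B.laxSub O := by
  obtain ⟨B_O, hB_O, hxB_O, hB_O_O⟩ := hO x hx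
  obtain ⟨_, ⟨B₁, hB₁, rfl⟩, hxB₁, hB₁_sub⟩ := h𝔅.isBasis.mem_nhds_iff.mp
    (Filter.inter_mem ((h𝔅.isOpen hB_O).mem_nhds hxB_O) hU)
  obtain ⟨B, hB, hxB, hB_sub, hB_le⟩ := h𝔅.compat x B₁ hB₁ B_O hB_O hxB₁ (hB₁_sub hxB₁).1
  have hB_B_O : B.laxSub B_O := ⟨fun p hp => (hB_sub hp).2, fun p q h => (hB_le p q h).2⟩
  exact ⟨B, hB, hxB, fun p hp => (hB₁_sub (hB_sub hp).1).2, hB_B_O.trans hB_O_O⟩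

theorem LocIncrAt.continuousAt (h𝔅 : IsOrderedBasis 𝔅) (h𝔅' : IsOrderedBasis 𝔅')
    {f : X → Y} {x : X} (h : LocIncrAt 𝔅 𝔅' f x) : ContinuousAt f x := by
  intro V hV
  obtain ⟨_, ⟨B', hB', rfl⟩, hxB', hB'V⟩ := h𝔅'.isBasis.mem_nhds_iff.mp hV
  obtain ⟨B, hB, hxB, hmap, -⟩ := h B' hB' hxB'
  exact Filter.mem_map.mpr <|
    Filter.mem_of_superset ((h𝔅.isOpen hB).mem_nhds hxB) fun p hp => hB'V (hmap p hp)

theorem locIncrAt_of_continuousAt (h𝔅 : IsOrderedBasis 𝔅) (h𝔅' : IsStrictOrderedBasis 𝔅')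
    {f : X → Y} {x : X} (hcont : ContinuousAt f x) {O : OSet X} (hO : O ∈ openPosets 𝔅)
    {B₀ : OSet Y} (hB₀ : B₀ ∈ 𝔅') (hxO : x ∈ O.carrier) (hmap : ∀ p ∈ O.carrier, f p ∈ B₀.carrier)
    (hincr : ∀ p q, O.le p q → B₀.le (f p) (f q)) : LocIncrAt 𝔅 𝔅' f x := by
  intro B' hB' hxB'
  obtain ⟨B'', hB'', hxB'', hB''_B₀, hB''_B'⟩ := h𝔅'.2 (f x) B₀ hB₀ B' hB' (hmap x hxO) hxB'
  obtain ⟨B, hB, hxB, hB_sub, hB_O⟩ := h𝔅.exists_laxSub_of_mem_nhds hO hxO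
    (hcont ((h𝔅'.1.isOpen hB'').mem_nhds hxB''))
  refine ⟨B, hB, hxB, fun p hp => hB''_B'.1 (hB_sub hp), fun p q hpq => ?_⟩
  obtain ⟨hp, hq⟩ := (h𝔅.isPoset B hB).1 p q hpq
  exact hB''_B₀.le_of_le hB''_B' (hB_sub hp) (hB_sub hq) (hincr p q (hB_O.2 p q hpq))

end

theorem LocIncrAt.exists_openPosets {X : Type u} {Y : Type v} [TopologicalSpace Y]
    {𝔅 : Set (OSet X)} {𝔅' : Set (OSet Y)} (h𝔅' : IsOrderedBasis 𝔅') {f : X → Y} {x : X}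
    (h : LocIncrAt 𝔅 𝔅' f x) :
    ∃ O ∈ openPosets 𝔅, ∃ B₀ ∈ 𝔅', x ∈ O.carrier ∧
      (∀ p ∈ O.carrier, f p ∈ B₀.carrier) ∧ ∀ p q, O.le p q → B₀.le (f p) (f q) := by
  obtain ⟨B₀, hB₀, hxB₀⟩ := h𝔅'.exists_mem (f x)
  obtain ⟨B, hB, hxB, hmap, hincr⟩ := h B₀ hB₀ hxB₀
  exact ⟨B, mem_openPosets_of_mem hB, B₀, hB₀, hxB, hmap, hincr⟩

/-- For `X` a locally ordered space (basis `𝔅`), `Y` a strictly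
locally ordered space (strict basis `𝔅'`) and `f : X → Y`: `f` is locally
increasing at `x` iff `f` is continuous at `x` and there are an open poset `O`
of `X` and `B₀ ∈ 𝔅'` with `x ∈ |O|`, `f(|O|) ⊆ |B₀|` and
`f : (|O|, ≤_O) → (|B₀|, ≤_{B₀})` increasing. -/
theorem stmt3 {X : Type u} {Y : Type v} [TopologicalSpace X] [TopologicalSpace Y]
    (𝔅 : Set (OSet X)) (h𝔅 : IsOrderedBasis 𝔅)
    (𝔅' : Set (OSet Y)) (h𝔅' : IsStrictOrderedBasis 𝔅')
    (f : X → Y) (x : X) :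
    LocIncrAt 𝔅 𝔅' f x ↔
      (ContinuousAt f x ∧
        ∃ O ∈ openPosets 𝔅, ∃ B₀ ∈ 𝔅', x ∈ O.carrier ∧
          (∀ p ∈ O.carrier, f p ∈ B₀.carrier) ∧
          ∀ p q, O.le p q → B₀.le (f p) (f q)) := by
  refine ⟨fun h => ⟨h.continuousAt h𝔅 h𝔅'.1, h.exists_openPosets h𝔅'.1⟩, ?_⟩
  rintro ⟨hcont, O, hO, B₀, hB₀, hxO, hmap, hincr⟩
  exact locIncrAt_of_continuousAt h𝔅 h𝔅' hcont hO hB₀ hxO hmap hincr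
end

section
/- Let X be a locally ordered space whose underlying topological space is Hausdorff, ∗ ∈ X, and O an open neighbourhood of ∗. Then the space X_O, with the final topology induced by q_O, is Hausdorff if, and only if, the open set O is closed in X. -/
universe u v w v'

/-! ## The directed circle -/

/-- The proper open arc `{e^{ix} : a < x < b}` of the unit circle, with its
standard partial order. -/
def arcOSet (a b : ℝ) : OSet Circle where
  carrier := Circle.exp '' Set.Ioo a b
  le p q := ∃ x ∈ Set.Ioo a b, ∃ y ∈ Set.Ioo a b, x ≤ y ∧ Circle.exp x = p ∧ Circle.exp y = q

/-- The strict ordered basis of the directed circle `S⃗¹`: all proper open arcs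
with their standard orders. -/
def dCircleBasis : Set (OSet Circle) :=
  {B | ∃ a b : ℝ, 0 < b - a ∧ b - a < 2 * Real.pi ∧ B = arcOSet a b}

/-- `K(f) = {t | ∀ s s', f (s,t) = f (s',t)}`. -/
def Kset {X : Type u} {Y : Type v} (f : Circle × X → Y) : Set X :=
  {t | ∀ s s' : Circle, f (s, t) = f (s', t)}

/-! ## The space `X_O` -/

/-- The underlying set of `X_O := O ⊔ (S¹ × (X ∖ O))`. -/
def XO (X : Type u) (O : Set X) : Type u := ↥O ⊕ (Circle × ↥(Oᶜ))

open Classical in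
/-- The map `q_O : S¹ × X → X_O`. -/
noncomputable def qO {X : Type u} (O : Set X) : Circle × X → XO X O := fun p =>
  if h : p.2 ∈ O then Sum.inl ⟨p.2, h⟩ else Sum.inr (p.1, ⟨p.2, h⟩)

/-- `X_O` carries the final topology of `q_O`. -/
noncomputable instance XO.topology {X : Type u} [TopologicalSpace X] (O : Set X) :
    TopologicalSpace (XO X O) :=
  TopologicalSpace.coinduced (qO O) inferInstance

/-- The subset `U_{α,A}` of `X_O` (for `αc` a set of points of the circle and
`A` a subset of `X`). -/
def USet {X : Type u} (O : Set X) (αc : Set Circle) (A : Set X) : Set (XO X O) :=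
  Sum.inl '' {t : ↥O | (t : X) ∈ A} ∪
    Sum.inr '' {p : Circle × ↥(Oᶜ) | p.1 ∈ αc ∧ (p.2 : X) ∈ A}

/-- The second component of an element of `X_O`. -/
def XO.p2 {X : Type u} {O : Set X} : XO X O → X :=
  Sum.elim (fun t => (t : X)) (fun p => (p.2 : X))

/-- The relation `≤¹_{α,A}` on `X_O`: the image under `q_O` of the product order
on `α × A`. -/
def leOne {X : Type u} (O : Set X) (α : OSet Circle) (A : OSet X) (u u' : XO X O) : Prop :=
  ∃ x x' : Circle × X, α.le x.1 x'.1 ∧ A.le x.2 x'.2 ∧ qO O x = u ∧ qO O x' = u'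

/-- The relation `⊑` on `X_O`. -/
def sqsub {X : Type u} (O : Set X) (α : OSet Circle) (A : OSet X) (u u' : XO X O) : Prop :=
  A.le (XO.p2 u) (XO.p2 u') ∧
    ((∃ t : ↥O, u = Sum.inl t) ∨ (∃ t : ↥O, u' = Sum.inl t) ∨
      ∃ (s s' : Circle) (t t' : ↥(Oᶜ)),
        u = Sum.inr (s, t) ∧ u' = Sum.inr (s', t') ∧ α.le s s')

/-- The poset `(U_{α,A}, ≤_{α,A})`, where `≤_{α,A}` is the transitive closure of
`≤¹_{α,A}`. -/
def UOSet {X : Type u} (O : Set X) (α : OSet Circle) (A : OSet X) : OSet (XO X O) where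
  carrier := USet O α.carrier A.carrier
  le := Relation.TransGen (leOne O α A)

/-- The ordered basis of `X_O`: the posets `(U_{α,A}, ≤_{α,A})` for `α` a proper
open arc and `A` an open poset of `X`. -/
def XOBasis {X : Type u} (𝔅 : Set (OSet X)) (O : Set X) : Set (OSet (XO X O)) :=
  {C | ∃ a b : ℝ, 0 < b - a ∧ b - a < 2 * Real.pi ∧
    ∃ A ∈ openPosets 𝔅, C = UOSet O (arcOSet a b) A}

/-! The fibre set `K(q_O)`, of points `t` whose fibre `S¹ × {t}` is collapsed by `q_O`, is exactly
`O`; since `q_O` is continuous, `K(q_O)` is closed as soon as `X_O` is Hausdorff. Conversely, if `O` is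
clopen then `q_O` remains continuous when `X_O` is viewed inside the Hausdorff space `X ⊔ (S¹ × X)`
(the case split on `t ∈ O` has empty frontier), so the final topology is finer than a Hausdorff one. -/

instance : Nontrivial Circle :=
  ⟨⟨1, Circle.exp Real.pi, fun h => by
    have h' := congrArg ((↑) : Circle → ℂ) h
    norm_num [Circle.coe_exp, Complex.exp_pi_mul_I] at h'⟩⟩

theorem isClosed_Kset {X : Type u} {Y : Type v} [TopologicalSpace X] [TopologicalSpace Y]
    [T2Space Y] {f : Circle × X → Y} (hf : Continuous f) : IsClosed (Kset f) := by
  simp only [Kset, Set.ofPred_forall]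
  exact isClosed_iInter fun s => isClosed_iInter fun s' =>
    isClosed_eq (hf.comp (Continuous.prodMk_right s)) (hf.comp (Continuous.prodMk_right s'))

section XO

variable {X : Type u} (O : Set X)

theorem qO_of_mem {s : Circle} {t : X} (ht : t ∈ O) : qO O (s, t) = Sum.inl ⟨t, ht⟩ :=
  dif_pos ht

theorem qO_of_notMem {s : Circle} {t : X} (ht : t ∉ O) : qO O (s, t) = Sum.inr (s, ⟨t, ht⟩) :=
  dif_neg ht

theorem Kset_qO : Kset (qO O) = O := by
  ext t
  refine ⟨fun ht => ?_, fun ht s s' => by rw [qO_of_mem O ht, qO_of_mem O ht]⟩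
  by_contra htO
  obtain ⟨s, s', hss'⟩ := exists_pair_ne Circle
  have h := ht s s'
  rw [qO_of_notMem O htO, qO_of_notMem O htO] at h
  exact hss' (congrArg Prod.fst (Sum.inr_injective h))

def XO.toSum : XO X O → X ⊕ (Circle × X) :=
  Sum.map Subtype.val (Prod.map id Subtype.val)

theorem XO.toSum_injective : Function.Injective (XO.toSum O) :=
  Subtype.val_injective.sumMap (Function.injective_id.prodMap Subtype.val_injective)

variable [TopologicalSpace X]

theorem XO.continuous_toSum (hO : IsClopen O) : Continuous (XO.toSum O) := by
  classical
  rw [continuous_coinduced_dom]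
  have h : XO.toSum O ∘ qO O = fun p => if p.2 ∈ O then Sum.inl p.2 else Sum.inr p := by
    funext ⟨s, t⟩
    by_cases ht : t ∈ O
    · rw [if_pos ht]
      exact congrArg (XO.toSum O) (qO_of_mem O ht)
    · rw [if_neg ht]
      exact congrArg (XO.toSum O) (qO_of_notMem O ht)
  rw [h]
  refine Continuous.if (fun p hp => ?_) (continuous_inl.comp continuous_snd) continuous_inr
  rw [show {p : Circle × X | p.2 ∈ O} = Prod.snd ⁻¹' O from rfl,
    (hO.preimage continuous_snd).frontier_eq] at hp
  exact hp.elim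

theorem XO.t2Space_of_isClopen [T2Space X] (hO : IsClopen O) : T2Space (XO X O) :=
  .of_injective_continuous (XO.toSum_injective O) (XO.continuous_toSum O hO)

theorem XO.isClosed_of_t2Space [T2Space (XO X O)] : IsClosed O :=
  Kset_qO O ▸ isClosed_Kset continuous_coinduced_rng

end XO

theorem stmt12_general {X : Type u} [TopologicalSpace X] [T2Space X]
    (O : Set X) (hO : IsOpen O) :
    T2Space (XO X O) ↔ IsClosed O :=
  ⟨fun _ => XO.isClosed_of_t2Space O, fun hOc => XO.t2Space_of_isClopen O ⟨hOc, hO⟩⟩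

/-- For `X` a locally ordered space with Hausdorff underlying
topology and `O` an open neighbourhood of `⋆`, the space `X_O` (with the final
topology of `q_O`) is Hausdorff iff `O` is closed in `X`. -/
theorem stmt12 {X : Type u} [TopologicalSpace X] [T2Space X] (𝔅 : Set (OSet X))
    (h𝔅 : IsOrderedBasis 𝔅) (star : X) (O : Set X) (hO : IsOpen O) (hstar : star ∈ O) :
    T2Space (XO X O) ↔ IsClosed O :=
  stmt12_general O hO
end
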